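/- Let Γ be a finite group. If (K,L) is an r-NDR pair of finite Γ-simplicial complexes, then (Sd(K), Sd(L)) is a (2r)-NDR pair. -/

import Mathlib

/-!
Passing to `Sd` turns two neighbourhood steps into one, `ν²(Sd M) ⊆ Sd ν(M)`, because faces
adjacent in `Sd K` are comparable; hence `ν^{2r}(Sd L) ⊆ Sd ν^r(L) ⊆ Sd A`.

A strong collapse `f : A → L` induces the collapse `σ ↦ f σ` of `Sd A` to `Sd L`. Each step
`η ≤ ζ` of the zigzag from the identity to `f` induces equivariant poset maps `F ≤ G` of the face
poset `FA`, and these are joined in `Def_Γ(Sd A, Sd L)` by switching from `F` to `G` one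
cardinality of faces at a time, from the top down: two consecutive switches `F_k`, `F_{k+1}` are
both below the multi-map `σ ↦ {F_k σ, F_{k+1} σ}`, which is simplicial because faces of the same
cardinality are incomparable.
-/

/-- An abstract simplicial complex on the vertex type `V`: a family of finite subsets of `V`
closed under taking subsets. -/
structure Cplx (V : Type*) where
  faces : Set (Set V)
  finite_mem : ∀ σ ∈ faces, Set.Finite σ
  down_closed : ∀ σ ∈ faces, ∀ τ ⊆ σ, τ ∈ faces

/-- The vertex set of a simplicial complex. -/
def Cplx.verts {V : Type*} (K : Cplx V) : Set V := {v | ({v} : Set V) ∈ K.faces}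

/-- `a` is an action of the group `Γ` on the vertex type of `K` by simplicial automorphisms. -/
def IsCplxAction (Γ : Type*) [Group Γ] {V : Type*} (a : Γ → V → V) (K : Cplx V) : Prop :=
  (∀ v, a 1 v = v) ∧ (∀ γ γ' : Γ, ∀ v, a (γ * γ') v = a γ (a γ' v)) ∧
    ∀ γ : Γ, ∀ σ ∈ K.faces, (a γ) '' σ ∈ K.faces

/-- A simplicial multi-map from `K` to `L`: it assigns to each vertex of `K` a nonempty subset
of the vertices of `L`, so that `⋃ v ∈ σ, η v` is a simplex of `L` for every simplex `σ` of
`K`. -/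
def IsMultiMap {V W : Type*} (K : Cplx V) (L : Cplx W) (η : V → Set W) : Prop :=
  (∀ v ∈ K.verts, (η v).Nonempty) ∧ ∀ σ ∈ K.faces, (⋃ v ∈ σ, η v) ∈ L.faces

/-- A Γ-equivariant simplicial multi-map, i.e. an element of `Map_Γ(K, L)`. -/
def IsEquivMultiMap (Γ : Type*) [Group Γ] {V W : Type*} (a : Γ → V → V) (b : Γ → W → W)
    (K : Cplx V) (L : Cplx W) (η : V → Set W) : Prop :=
  IsMultiMap K L η ∧ ∀ γ : Γ, ∀ v ∈ K.verts, η (a γ v) = (b γ) '' (η v)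

/-- Pointwise order on multi-maps out of `K` (on the vertices of `K`). -/
def mmLE {V W : Type*} (K : Cplx V) (η η' : V → Set W) : Prop := ∀ v ∈ K.verts, η v ⊆ η' v

/-- An element of `Def_Γ(K, L)`: a Γ-equivariant simplicial multi-map `K → K` with
`η v = {v}` for every vertex `v` of the subcomplex `L`. -/
def IsDefMultiMap (Γ : Type*) [Group Γ] {V : Type*} (a : Γ → V → V) (K L : Cplx V)
    (η : V → Set V) : Prop :=
  IsEquivMultiMap Γ a a K K η ∧ ∀ v ∈ L.verts, η v = {v}

/-- One step of a zigzag in `Def_Γ(K, L)`: both multi-maps lie in `Def_Γ(K, L)` and they are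
comparable. -/
def cplxDefStep (Γ : Type*) [Group Γ] {V : Type*} (a : Γ → V → V) (K L : Cplx V)
    (η η' : V → Set V) : Prop :=
  IsDefMultiMap Γ a K L η ∧ IsDefMultiMap Γ a K L η' ∧ (mmLE K η η' ∨ mmLE K η' η)

/-- The Γ-simplicial complex `K` strongly Γ-collapses to its Γ-subcomplex `L`: there is a
simplicial map `f` belonging to the identity component of `Def_Γ(K, L)` (joined to the
identity by a finite zigzag of pairwise comparable elements) whose image is contained in
`L`. -/
def CplxCollapses (Γ : Type*) [Group Γ] {V : Type*} (a : Γ → V → V) (K L : Cplx V) : Prop :=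
  ∃ f : V → V, IsDefMultiMap Γ a K L (fun v => {f v}) ∧
    Relation.ReflTransGen (cplxDefStep Γ a K L) (fun v => {v}) (fun v => {f v}) ∧
    ∀ σ ∈ K.faces, f '' σ ∈ L.faces
/-- The face poset of `K`, realized as the set of nonempty simplices of `K` inside the poset
`Set V` (ordered by inclusion). -/
def facePoset {V : Type*} (K : Cplx V) : Set (Set V) := {σ | σ ∈ K.faces ∧ σ.Nonempty}

/-- The barycentric subdivision `Sd(K) = Δ(FK)`: the simplicial complex on the nonempty
simplices of `K` whose simplices are the finite chains of the face poset of `K`. -/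
def sd {V : Type*} (K : Cplx V) : Cplx (Set V) where
  faces := {c | c.Finite ∧ (∀ σ ∈ c, σ ∈ facePoset K) ∧ IsChain (· ⊆ ·) c}
  finite_mem := fun _ h => h.1
  down_closed := fun c hc d hdc =>
    ⟨hc.1.subset hdc, fun σ hσ => hc.2.1 σ (hdc hσ),
      by exact hc.2.2.mono hdc⟩
/-- The neighborhood `ν_K(L) = ⋃_{v ∈ V(L)} st_K(v)` of the subcomplex `L` in `K`. -/
def nbhd {V : Type*} (K L : Cplx V) : Cplx V where
  faces := {σ | ∃ v ∈ L.verts, insert v σ ∈ K.faces}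
  finite_mem := fun σ h => by
    obtain ⟨v, -, h⟩ := h
    exact (K.finite_mem _ h).subset (Set.subset_insert _ _)
  down_closed := fun σ h τ hτσ => by
    obtain ⟨v, hv, h⟩ := h
    exact ⟨v, hv, K.down_closed _ h _ (Set.insert_subset_insert hτσ)⟩

/-- The iterated neighborhood `ν^r_K(L)` (with `ν^0_K(L) = L`). -/
def nbhdIter {V : Type*} (K L : Cplx V) : ℕ → Cplx V
  | 0 => L
  | r + 1 => nbhd K (nbhdIter K L r)

/-- `(K, L)` is an `r`-NDR pair of Γ-simplicial complexes: there is a Γ-subcomplex `A` of `K`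
containing `ν^r_K(L)` (and `L`) which strongly Γ-collapses to `L`. -/
def IsNDRPair (Γ : Type*) [Group Γ] {V : Type*} (a : Γ → V → V) (K L : Cplx V) (r : ℕ) : Prop :=
  ∃ A : Cplx V, A.faces ⊆ K.faces ∧ L.faces ⊆ A.faces ∧
    (∀ γ : Γ, ∀ σ ∈ A.faces, (a γ) '' σ ∈ A.faces) ∧
    (nbhdIter K L r).faces ⊆ A.faces ∧ CplxCollapses Γ a A L

open Set Relation

section Subdivision

variable {Γ V W : Type*}

lemma Cplx.subset_verts {A : Cplx V} {σ : Set V} (hσ : σ ∈ A.faces) : σ ⊆ A.verts :=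
  fun _ hv => A.down_closed σ hσ _ (singleton_subset_iff.2 hv)

lemma IsCplxAction.injective [Group Γ] {a : Γ → V → V} {K : Cplx V} (ha : IsCplxAction Γ a K)
    (γ : Γ) : Function.Injective (a γ) :=
  Function.LeftInverse.injective (g := a γ⁻¹) fun v => by rw [← ha.2.1, inv_mul_cancel, ha.1]

instance [Group Γ] (a : Γ → V → V) (K L : Cplx V) : Std.Symm (cplxDefStep Γ a K L) :=
  ⟨fun _ _ h => ⟨h.2.1, h.1, h.2.2.symm⟩⟩

lemma sd_verts (A : Cplx V) : (sd A).verts = facePoset A := by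
  ext σ
  exact ⟨fun h => h.2.1 σ rfl,
    fun h => ⟨finite_singleton σ, by rintro τ rfl; exact h, subsingleton_singleton.isChain⟩⟩

lemma sd_mono {A B : Cplx V} (h : A.faces ⊆ B.faces) : (sd A).faces ⊆ (sd B).faces :=
  fun _ hc => ⟨hc.1, fun σ hσ => ⟨h (hc.2.1 σ hσ).1, (hc.2.1 σ hσ).2⟩, hc.2.2⟩

lemma nbhd_mono (K : Cplx V) {A B : Cplx V} (h : A.faces ⊆ B.faces) :
    (nbhd K A).faces ⊆ (nbhd K B).faces :=
  fun _ ⟨v, hv, hσ⟩ => ⟨v, h hv, hσ⟩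

lemma nbhd_nbhd_sd_subset (K M : Cplx V) :
    (nbhd (sd K) (nbhd (sd K) (sd M))).faces ⊆ (sd (nbhd K M)).faces := by
  rintro c ⟨σ, ⟨τ, hτM, hτσ⟩, hσc⟩
  rw [sd_verts] at hτM
  -- `τ` and `σ` are comparable, so they share a vertex, which is a vertex of `M`
  obtain ⟨v, hvτ, hvσ⟩ : (τ ∩ σ).Nonempty := by
    rcases hτσ.2.2.total (mem_insert τ _) (mem_insert_of_mem τ rfl) with h | h
    · rw [inter_eq_left.2 h]; exact hτM.2
    · rw [inter_eq_right.2 h]; exact (hτσ.2.1 σ (mem_insert_of_mem τ rfl)).2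
  refine ⟨hσc.1.subset (subset_insert _ _), fun ρ hρ => ⟨⟨v, M.subset_verts hτM.1 hvτ, ?_⟩,
    (hσc.2.1 ρ (mem_insert_of_mem σ hρ)).2⟩, hσc.2.2.mono (subset_insert _ _)⟩
  have hρσK : ρ ∪ σ ∈ K.faces := by
    rcases hσc.2.2.total (mem_insert_of_mem σ hρ) (mem_insert σ c) with h | h
    · rw [union_eq_right.2 h]; exact (hσc.2.1 σ (mem_insert σ c)).1
    · rw [union_eq_left.2 h]; exact (hσc.2.1 ρ (mem_insert_of_mem σ hρ)).1
  exact K.down_closed _ hρσK _ (insert_subset (Or.inr hvσ) subset_union_left)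

lemma nbhdIter_sd_subset (K M : Cplx V) (r : ℕ) :
    (nbhdIter (sd K) (sd M) (2 * r)).faces ⊆ (sd (nbhdIter K M r)).faces := by
  induction r with
  | zero => rfl
  | succ r ih =>
    exact (nbhd_mono _ (nbhd_mono _ ih)).trans (nbhd_nbhd_sd_subset K _)

lemma image_mem_sd_faces {A : Cplx V} {B : Cplx W} {F : Set V → Set W}
    (hmaps : MapsTo F (facePoset A) (facePoset B)) (hmono : MonotoneOn F (facePoset A))
    {c : Set (Set V)} (hc : c ∈ (sd A).faces) : F '' c ∈ (sd B).faces := by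
  refine ⟨hc.1.image F, forall_mem_image.2 fun σ hσ => hmaps (hc.2.1 σ hσ), ?_⟩
  rintro _ ⟨σ, hσ, rfl⟩ _ ⟨τ, hτ, rfl⟩ -
  exact (hc.2.2.total hσ hτ).imp (hmono (hc.2.1 σ hσ) (hc.2.1 τ hτ))
    (hmono (hc.2.1 τ hτ) (hc.2.1 σ hσ))

lemma image_image_mem_sd_faces {A : Cplx V} {B : Cplx W} {f : V → W}
    (hf : ∀ σ ∈ A.faces, f '' σ ∈ B.faces) {c : Set (Set V)} (hc : c ∈ (sd A).faces) :
    (f '' ·) '' c ∈ (sd B).faces :=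
  image_mem_sd_faces (fun σ hσ => ⟨hf σ hσ.1, hσ.2.image f⟩) (fun _ _ _ _ h => image_mono h) hc

/-- `F` is a Γ-equivariant poset map `FA → FA` fixing `FL`; `σ ↦ {F σ}` is then a simplicial
map in `Def_Γ(Sd A, Sd L)`. -/
structure IsDefFaceMap (a : Γ → V → V) (A L : Cplx V) (F : Set V → Set V) : Prop where
  mapsTo : MapsTo F (facePoset A) (facePoset A)
  monotoneOn : MonotoneOn F (facePoset A)
  eq_self : ∀ σ ∈ facePoset L, F σ = σ
  map_image : ∀ γ : Γ, ∀ σ ∈ facePoset A, F (a γ '' σ) = a γ '' F σ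

def faceMap (η : V → Set W) (σ : Set V) : Set W := ⋃ v ∈ σ, η v

lemma faceMap_singleton_self : faceMap (fun v : V => ({v} : Set V)) = id :=
  funext biUnion_of_singleton

lemma faceMap_singleton (f : V → W) : faceMap (fun v => ({f v} : Set W)) = (f '' ·) :=
  funext fun σ => (image_eq_iUnion f σ).symm

lemma faceMap_mono {A : Cplx V} {η ζ : V → Set W} (h : mmLE A η ζ) {σ : Set V}
    (hσ : σ ∈ A.faces) : faceMap η σ ⊆ faceMap ζ σ :=
  biUnion_mono subset_rfl fun v hv => h v (A.subset_verts hσ hv)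

section DefFaceMap

variable [Group Γ] {a : Γ → V → V} {A L : Cplx V}

lemma IsDefMultiMap.isDefFaceMap {η : V → Set V} (hη : IsDefMultiMap Γ a A L η) :
    IsDefFaceMap a A L (faceMap η) where
  mapsTo σ hσ := by
    obtain ⟨v, hv⟩ := hσ.2
    obtain ⟨w, hw⟩ := hη.1.1.1 v (A.subset_verts hσ.1 hv)
    exact ⟨hη.1.1.2 σ hσ.1, w, mem_biUnion hv hw⟩
  monotoneOn _ _ _ _ h := biUnion_subset_biUnion_left h
  eq_self σ hσ :=
    (iUnion₂_congr fun v hv => hη.2 v (L.subset_verts hσ.1 hv)).trans (biUnion_of_singleton σ)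
  map_image γ σ hσ := by
    simp only [faceMap, biUnion_image, image_iUnion₂]
    exact iUnion₂_congr fun v hv => hη.1.2 γ v (A.subset_verts hσ.1 hv)

lemma IsDefFaceMap.isDefMultiMap_sd {F : Set V → Set V} (hF : IsDefFaceMap a A L F) :
    IsDefMultiMap Γ (fun γ σ => a γ '' σ) (sd A) (sd L) (fun σ => {F σ}) := by
  refine ⟨⟨⟨fun σ _ => singleton_nonempty _, fun c hc => ?_⟩, fun γ σ hσ => ?_⟩, fun σ hσ => ?_⟩
  · rw [← image_eq_iUnion]
    exact image_mem_sd_faces hF.mapsTo hF.monotoneOn hc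
  · rw [sd_verts] at hσ
    rw [image_singleton]
    exact congrArg singleton (hF.map_image γ σ hσ)
  · rw [sd_verts] at hσ
    exact congrArg singleton (hF.eq_self σ hσ)

end DefFaceMap

def spliceByCard (F G : Set V → Set W) (k : ℕ) (σ : Set V) : Set W :=
  if k ≤ σ.ncard then G σ else F σ

lemma spliceByCard_zero (F G : Set V → Set W) : spliceByCard F G 0 = G :=
  funext fun _ => if_pos (Nat.zero_le _)

lemma spliceByCard_of_ncard_lt (F G : Set V → Set W) {k : ℕ} {σ : Set V} (h : σ.ncard < k) :
    spliceByCard F G k σ = F σ :=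
  if_neg (not_le.2 h)

section Splice

variable {a : Γ → V → V} {A L : Cplx V} {F G : Set V → Set V}

lemma isDefFaceMap_spliceByCard (ha : ∀ γ, Function.Injective (a γ))
    (hF : IsDefFaceMap a A L F) (hG : IsDefFaceMap a A L G)
    (hle : ∀ σ ∈ facePoset A, F σ ⊆ G σ) (k : ℕ) :
    IsDefFaceMap a A L (spliceByCard F G k) where
  mapsTo σ hσ := by
    unfold spliceByCard
    split_ifs
    exacts [hG.mapsTo hσ, hF.mapsTo hσ]
  monotoneOn σ hσ τ hτ hστ := by
    have hcard : σ.ncard ≤ τ.ncard := ncard_le_ncard hστ (A.finite_mem τ hτ.1)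
    unfold spliceByCard
    split_ifs with hσk hτk hτk
    · exact hG.monotoneOn hσ hτ hστ
    · omega
    · exact (hF.monotoneOn hσ hτ hστ).trans (hle τ hτ)
    · exact hF.monotoneOn hσ hτ hστ
  eq_self σ hσ := by
    unfold spliceByCard
    split_ifs
    exacts [hG.eq_self σ hσ, hF.eq_self σ hσ]
  map_image γ σ hσ := by
    unfold spliceByCard
    rw [ncard_image_of_injective σ (ha γ)]
    split_ifs
    exacts [hG.map_image γ σ hσ, hF.map_image γ σ hσ]

lemma spliceByCard_subset_or_subset (hF : IsDefFaceMap a A L F) (hG : IsDefFaceMap a A L G)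
    (hle : ∀ σ ∈ facePoset A, F σ ⊆ G σ) {σ τ : Set V} (hσ : σ ∈ facePoset A)
    (hτ : τ ∈ facePoset A) (hστ : σ ⊆ τ) {i j : ℕ} (hij : j ≤ i + 1) :
    spliceByCard F G i σ ⊆ spliceByCard F G j τ ∨ spliceByCard F G j τ ⊆ spliceByCard F G i σ := by
  have hτfin := A.finite_mem τ hτ.1
  have hcard : σ.ncard ≤ τ.ncard := ncard_le_ncard hστ hτfin
  unfold spliceByCard
  split_ifs with hσi hτj hτj
  · exact Or.inl (hG.monotoneOn hσ hτ hστ)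
  · obtain rfl : σ = τ := eq_of_subset_of_ncard_le hστ (by omega) hτfin
    exact Or.inr (hle σ hσ)
  · exact Or.inl ((hF.monotoneOn hσ hτ hστ).trans (hle τ hτ))
  · exact Or.inl (hF.monotoneOn hσ hτ hστ)

end Splice

section Zigzag

variable [Group Γ] {a : Γ → V → V} {A L : Cplx V} {F G : Set V → Set V}

lemma IsDefFaceMap.isDefMultiMap_pair (hF : IsDefFaceMap a A L F) (hG : IsDefFaceMap a A L G)
    (hcomp : ∀ σ ∈ facePoset A, ∀ τ ∈ facePoset A, σ ⊆ τ →
      ∀ x ∈ ({F σ, G σ} : Set (Set V)), ∀ y ∈ ({F τ, G τ} : Set (Set V)), x ⊆ y ∨ y ⊆ x) :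
    IsDefMultiMap Γ (fun γ σ => a γ '' σ) (sd A) (sd L) (fun σ => {F σ, G σ}) := by
  refine ⟨⟨⟨fun σ _ => insert_nonempty _ _, fun c hc => ⟨?_, ?_, ?_⟩⟩, fun γ σ hσ => ?_⟩,
    fun σ hσ => ?_⟩
  · exact hc.1.biUnion fun _ _ => toFinite _
  · simp only [mem_iUnion₂]
    rintro _ ⟨σ, hσ, rfl | rfl⟩
    exacts [hF.mapsTo (hc.2.1 σ hσ), hG.mapsTo (hc.2.1 σ hσ)]
  · intro x hx y hy _
    obtain ⟨σ, hσ, hx⟩ := mem_iUnion₂.1 hx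
    obtain ⟨τ, hτ, hy⟩ := mem_iUnion₂.1 hy
    rcases hc.2.2.total hσ hτ with h | h
    · exact hcomp σ (hc.2.1 σ hσ) τ (hc.2.1 τ hτ) h x hx y hy
    · exact (hcomp τ (hc.2.1 τ hτ) σ (hc.2.1 σ hσ) h y hy x hx).symm
  · rw [sd_verts] at hσ
    simp only [image_pair, hF.map_image γ σ hσ, hG.map_image γ σ hσ]
  · rw [sd_verts] at hσ
    simp only [hF.eq_self σ hσ, hG.eq_self σ hσ, pair_eq_singleton]

lemma IsDefFaceMap.reflTransGen_of_subset_or_subset (hF : IsDefFaceMap a A L F)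
    (hG : IsDefFaceMap a A L G)
    (hcomp : ∀ σ ∈ facePoset A, ∀ τ ∈ facePoset A, σ ⊆ τ →
      ∀ x ∈ ({F σ, G σ} : Set (Set V)), ∀ y ∈ ({F τ, G τ} : Set (Set V)), x ⊆ y ∨ y ⊆ x) :
    ReflTransGen (cplxDefStep Γ (fun γ σ => a γ '' σ) (sd A) (sd L))
      (fun σ => {F σ}) (fun σ => {G σ}) :=
  have hpair := hF.isDefMultiMap_pair hG hcomp
  .head ⟨hF.isDefMultiMap_sd, hpair, .inl fun _ _ => singleton_subset_iff.2 (mem_insert _ _)⟩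
    (.single ⟨hpair, hG.isDefMultiMap_sd,
      .inr fun _ _ => singleton_subset_iff.2 (mem_insert_of_mem _ rfl)⟩)

lemma IsDefFaceMap.reflTransGen_of_le (ha : ∀ γ, Function.Injective (a γ))
    (hA : A.verts.Finite) (hF : IsDefFaceMap a A L F) (hG : IsDefFaceMap a A L G)
    (hle : ∀ σ ∈ facePoset A, F σ ⊆ G σ) :
    ReflTransGen (cplxDefStep Γ (fun γ σ => a γ '' σ) (sd A) (sd L))
      (fun σ => {F σ}) (fun σ => {G σ}) := by
  have hsplice := isDefFaceMap_spliceByCard ha hF hG hle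
  have hdown (k : ℕ) : ReflTransGen (cplxDefStep Γ (fun γ σ => a γ '' σ) (sd A) (sd L))
      (fun σ => {spliceByCard F G k σ}) (fun σ => {G σ}) := by
    induction k with
    | zero => rw [spliceByCard_zero]
    | succ k ih =>
      refine .trans ((hsplice (k + 1)).reflTransGen_of_subset_or_subset (hsplice k) ?_) ih
      rintro σ hσ τ hτ hστ x (rfl | rfl) y (rfl | rfl) <;>
        exact spliceByCard_subset_or_subset hF hG hle hσ hτ hστ (by omega)
  obtain ⟨N, hN⟩ : ∃ N, ∀ σ ∈ facePoset A, σ.ncard < N := ⟨A.verts.ncard + 1, fun σ hσ =>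
    Nat.lt_succ_of_le (ncard_le_ncard (A.subset_verts hσ.1) hA)⟩
  refine .head ⟨hF.isDefMultiMap_sd, (hsplice N).isDefMultiMap_sd, .inl fun σ hσ => ?_⟩ (hdown N)
  rw [sd_verts] at hσ
  exact (congrArg singleton (spliceByCard_of_ncard_lt F G (hN σ hσ))).ge

lemma reflTransGen_sd_faceMap (ha : ∀ γ, Function.Injective (a γ)) (hA : A.verts.Finite)
    {η ζ : V → Set V} (h : ReflTransGen (cplxDefStep Γ a A L) η ζ) :
    ReflTransGen (cplxDefStep Γ (fun γ σ => a γ '' σ) (sd A) (sd L))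
      (fun σ => {faceMap η σ}) (fun σ => {faceMap ζ σ}) := by
  induction h with
  | refl => rfl
  | tail _ hstep ih =>
    obtain ⟨hη, hζ, hle | hle⟩ := hstep
    · exact ih.trans (hη.isDefFaceMap.reflTransGen_of_le ha hA hζ.isDefFaceMap
        fun σ hσ => faceMap_mono hle hσ.1)
    · exact ih.trans (Std.Symm.symm _ _ (hζ.isDefFaceMap.reflTransGen_of_le ha hA
        hη.isDefFaceMap fun σ hσ => faceMap_mono hle hσ.1))

end Zigzag

end Subdivision

theorem sd_isNDRPair_of_isNDRPair_general {Γ V : Type*} [Group Γ]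
    (a : Γ → V → V) (K L : Cplx V) (ha : IsCplxAction Γ a K)
    (hfin : K.verts.Finite)
    (r : ℕ) (h : IsNDRPair Γ a K L r) :
    IsNDRPair Γ (fun γ (σ : Set V) => (a γ) '' σ) (sd K) (sd L) (2 * r) := by
  obtain ⟨A, hAK, hLA, hAinv, hνA, f, hf, hzigzag, hfL⟩ := h
  have hsd_zigzag := reflTransGen_sd_faceMap ha.injective (hfin.subset fun _ hv => hAK hv) hzigzag
  rw [faceMap_singleton_self, faceMap_singleton] at hsd_zigzag
  refine ⟨sd A, sd_mono hAK, sd_mono hLA, fun γ _ hc => image_image_mem_sd_faces (hAinv γ) hc,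
    (nbhdIter_sd_subset K L r).trans (sd_mono hνA), (f '' ·), ?_, hsd_zigzag,
    fun _ hc => image_image_mem_sd_faces hfL hc⟩
  rw [← faceMap_singleton]
  exact hf.isDefFaceMap.isDefMultiMap_sd

/-- Let Γ be a finite group.  If (K,L) is an r-NDR pair of finite Γ-simplicial
complexes, then (Sd(K), Sd(L)) is a (2r)-NDR pair. -/
theorem sd_isNDRPair_of_isNDRPair {Γ V : Type*} [Group Γ] [Finite Γ]
    (a : Γ → V → V) (K L : Cplx V) (ha : IsCplxAction Γ a K)
    (haL : ∀ γ : Γ, ∀ σ ∈ L.faces, (a γ) '' σ ∈ L.faces)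
    (hfin : K.verts.Finite) (hLK : L.faces ⊆ K.faces)
    (r : ℕ) (hr : 1 ≤ r) (h : IsNDRPair Γ a K L r) :
    IsNDRPair Γ (fun γ (σ : Set V) => (a γ) '' σ) (sd K) (sd L) (2 * r) :=
  sd_isNDRPair_of_isNDRPair_general a K L ha hfin r h
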